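/- For non-proportional nonzero linear forms L_1, L_2 and 1 ≤ k < d with 2k ≥ d, the subspaces V_1 = L_1^{d-k} R_k and V_2 = L_2^{d-k} R_k of R_d satisfy dist(V_1, V_2) = 2·(binomial(k+n,n) - binomial(2k-d+n,n)). -/

import Mathlib

/-!
Two non-proportional linear forms are coprime in the factorial ring `F[X₀, …, Xₙ]`, so
`L₂ᵐ ∣ L₁ᵐ A` forces `L₂ᵐ ∣ A` (with `m = d - k`). Since a cofactor of a homogeneous polynomial
inside a homogeneous product is itself homogeneous, this identifies
`L₁ᵐ R_k ∩ L₂ᵐ R_k = L₁ᵐ L₂ᵐ R_{2k-d}`. Multiplication by a nonzero polynomial is injective, so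
`dim V₁ = dim V₂ = dim R_k`, and Grassmann's formula gives the distance.
-/

namespace MvPolynomial

variable {σ R F : Type*}

attribute [local instance] MvPolynomial.gradedAlgebra in
theorem homogeneousComponent_mul_of_isHomogeneous_left [CommSemiring R]
    {p : MvPolynomial σ R} {a : ℕ} (hp : p.IsHomogeneous a) (q : MvPolynomial σ R) (j : ℕ) :
    homogeneousComponent (a + j) (p * q) = p * homogeneousComponent j q := by
  classical
  simpa only [← DirectSum.Decomposition.decompose'_eq, decomposition.decompose'_apply] using
    DirectSum.coe_decompose_mul_add_of_left_mem (homogeneousSubmodule σ R) (j := j) (b := q) hp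

theorem IsHomogeneous.of_mul_left [CommRing R] [IsDomain R] {p q : MvPolynomial σ R} {a b : ℕ}
    (hp : p.IsHomogeneous a) (hp0 : p ≠ 0) (hpq : (p * q).IsHomogeneous (a + b)) :
    q.IsHomogeneous b := by
  intro d hd
  change Finsupp.weight (fun _ ↦ 1) d = b
  rw [← Finsupp.degree_eq_weight_one]
  by_contra hne
  have hzero : homogeneousComponent d.degree q = 0 := by
    apply mul_left_cancel₀ hp0
    rw [← homogeneousComponent_mul_of_isHomogeneous_left hp, homogeneousComponent_of_mem hpq,
      if_neg (by omega), mul_zero]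
  apply hd
  simpa [coeff_homogeneousComponent] using congr(coeff d $hzero)

theorem finrank_homogeneousSubmodule [CommRing R] [StrongRankCondition R] [Fintype σ] (m : ℕ) :
    Module.finrank R (homogeneousSubmodule σ R m) = (Fintype.card σ + m - 1).choose m := by
  classical
  let degreeEqSym : {d : σ →₀ ℕ | d.degree = m} ≃ Sym σ m :=
    (Equiv.subtypeEquivRight fun d ↦ by simp [Finsupp.degree_apply, Finsupp.sum]).trans
      (Sym.equivNatSum σ m).symm
  have : Fintype {d : σ →₀ ℕ | d.degree = m} := .ofEquiv _ degreeEqSym.symm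
  rw [((LinearEquiv.ofEq _ _ (homogeneousSubmodule_eq_finsupp_supported σ R m)).trans
      (AddMonoidAlgebra.supportedEquivFinsupp _)).finrank_eq, Module.finrank_finsupp_self,
    Fintype.card_congr degreeEqSym, Sym.card_sym_eq_choose]

section Field

variable [Field F]

theorem irreducible_of_isHomogeneous_one {L : MvPolynomial σ F} (hL : L.IsHomogeneous 1)
    (hL0 : L ≠ 0) : Irreducible L :=
  irreducible_of_totalDegree_eq_one (hL.totalDegree hL0) fun x hx ↦ isUnit_iff_ne_zero.mpr <| by
    rintro rfl
    exact hL0 (by ext d; simpa using hx d)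

theorem isRelPrime_of_isHomogeneous_one {L₁ L₂ : MvPolynomial σ F} (hL₁ : L₁.IsHomogeneous 1)
    (hL₂ : L₂.IsHomogeneous 1) (hL₂0 : L₂ ≠ 0) (hprop : ¬ ∃ c : F, L₁ = c • L₂) :
    IsRelPrime L₁ L₂ := by
  refine ((irreducible_of_isHomogeneous_one hL₂ hL₂0).isRelPrime_iff_not_dvd.mpr ?_).symm
  rintro ⟨u, rfl⟩
  have hu : u.IsHomogeneous 0 := hL₂.of_mul_left hL₂0 hL₁
  refine hprop ⟨coeff 0 u, ?_⟩
  rw [smul_eq_C_mul, ← totalDegree_eq_zero_iff_eq_C.mp (Nat.le_zero.mp hu.totalDegree_le),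
    mul_comm]

theorem map_mulLeft_inf_map_mulLeft {P Q : MvPolynomial σ F} {a b : ℕ}
    (hP : P.IsHomogeneous a) (hQ : Q.IsHomogeneous b) (hQ0 : Q ≠ 0) (hPQ : IsRelPrime P Q)
    (j : ℕ) :
    (homogeneousSubmodule σ F (b + j)).map (LinearMap.mulLeft F P) ⊓
        (homogeneousSubmodule σ F (a + j)).map (LinearMap.mulLeft F Q) =
      (homogeneousSubmodule σ F j).map (LinearMap.mulLeft F (P * Q)) := by
  apply le_antisymm
  · rintro x ⟨⟨A, hA, rfl⟩, ⟨B, -, hBA⟩⟩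
    obtain ⟨C, rfl⟩ : Q ∣ A := hPQ.symm.dvd_of_dvd_mul_left ⟨B, hBA.symm⟩
    exact ⟨C, hQ.of_mul_left hQ0 hA, by simp⟩
  · rintro x ⟨C, hC, rfl⟩
    exact ⟨⟨Q * C, hQ.mul hC, by simp⟩,
      ⟨P * C, hP.mul hC, by simp [mul_left_comm P Q]⟩⟩

end Field

end MvPolynomial

theorem Submodule.finrank_map_mulLeft {F A : Type*} [Field F] [Ring A] [IsDomain A] [Algebra F A]
    {P : A} (hP : P ≠ 0) (S : Submodule F A) :
    Module.finrank F (S.map (LinearMap.mulLeft F P)) = Module.finrank F S :=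
  (S.equivMapOfInjective _ (mul_right_injective₀ hP)).finrank_eq.symm

open MvPolynomial

theorem osculating_dist_large_k_general (F : Type*) [Field F] (n d k : ℕ)
    (hkd : k < d) (h2k : d ≤ 2 * k)
    (L₁ L₂ : MvPolynomial (Fin (n+1)) F)
    (hL₁ : L₁ ∈ MvPolynomial.homogeneousSubmodule (Fin (n+1)) F 1)
    (hL₂ : L₂ ∈ MvPolynomial.homogeneousSubmodule (Fin (n+1)) F 1)
    (hL₁0 : L₁ ≠ 0) (hL₂0 : L₂ ≠ 0)
    (hprop : ¬ ∃ c : F, L₁ = c • L₂)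
    (V₁ V₂ : Submodule F (MvPolynomial (Fin (n+1)) F))
    (hV₁ : V₁ = (MvPolynomial.homogeneousSubmodule (Fin (n+1)) F k).map
        (LinearMap.mulLeft F (L₁ ^ (d - k))))
    (hV₂ : V₂ = (MvPolynomial.homogeneousSubmodule (Fin (n+1)) F k).map
        (LinearMap.mulLeft F (L₂ ^ (d - k)))) :
    Module.finrank F (V₁ ⊔ V₂ : Submodule F (MvPolynomial (Fin (n+1)) F)) -
      Module.finrank F (V₁ ⊓ V₂ : Submodule F (MvPolynomial (Fin (n+1)) F)) =
    2 * ((k + n).choose n - (2 * k - d + n).choose n) := by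
  set m := d - k
  have finrank_map {P : MvPolynomial (Fin (n + 1)) F} (hP : P ≠ 0) (j : ℕ) :
      Module.finrank F ((homogeneousSubmodule (Fin (n + 1)) F j).map (LinearMap.mulLeft F P)) =
        (j + n).choose n := by
    rw [Submodule.finrank_map_mulLeft hP, finrank_homogeneousSubmodule, Fintype.card_fin,
      show n + 1 + j - 1 = j + n by omega, Nat.choose_symm_add]
  have hinf : V₁ ⊓ V₂ = (homogeneousSubmodule (Fin (n + 1)) F (2 * k - d)).map
      (LinearMap.mulLeft F (L₁ ^ m * L₂ ^ m)) := by
    have := map_mulLeft_inf_map_mulLeft (by simpa using hL₁.pow m) (by simpa using hL₂.pow m)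
      (pow_ne_zero m hL₂0) (isRelPrime_of_isHomogeneous_one hL₁ hL₂ hL₂0 hprop).pow (2 * k - d)
    rwa [show m + (2 * k - d) = k by omega, ← hV₁, ← hV₂] at this
  have h₁ : Module.finrank F V₁ = (k + n).choose n := hV₁ ▸ finrank_map (pow_ne_zero m hL₁0) k
  have h₂ : Module.finrank F V₂ = (k + n).choose n := hV₂ ▸ finrank_map (pow_ne_zero m hL₂0) k
  have h₃ : Module.finrank F (V₁ ⊓ V₂ : Submodule F _) = (2 * k - d + n).choose n :=
    hinf ▸ finrank_map (mul_ne_zero (pow_ne_zero m hL₁0) (pow_ne_zero m hL₂0)) _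
  have : FiniteDimensional F V₁ := Module.finite_of_finrank_pos (h₁ ▸ Nat.choose_pos (by omega))
  have : FiniteDimensional F V₂ := Module.finite_of_finrank_pos (h₂ ▸ Nat.choose_pos (by omega))
  have grassmann := Submodule.finrank_sup_add_finrank_inf_eq V₁ V₂
  have := Nat.choose_le_choose n (show 2 * k - d + n ≤ k + n by omega)
  omega

theorem osculating_dist_large_k (F : Type*) [Field F] (n d k : ℕ) (hn : 1 ≤ n)
    (hk : 1 ≤ k) (hkd : k < d) (h2k : d ≤ 2 * k)
    (L₁ L₂ : MvPolynomial (Fin (n+1)) F)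
    (hL₁ : L₁ ∈ MvPolynomial.homogeneousSubmodule (Fin (n+1)) F 1)
    (hL₂ : L₂ ∈ MvPolynomial.homogeneousSubmodule (Fin (n+1)) F 1)
    (hL₁0 : L₁ ≠ 0) (hL₂0 : L₂ ≠ 0)
    (hprop : ¬ ∃ c : F, L₁ = c • L₂)
    (V₁ V₂ : Submodule F (MvPolynomial (Fin (n+1)) F))
    (hV₁ : V₁ = (MvPolynomial.homogeneousSubmodule (Fin (n+1)) F k).map
        (LinearMap.mulLeft F (L₁ ^ (d - k))))
    (hV₂ : V₂ = (MvPolynomial.homogeneousSubmodule (Fin (n+1)) F k).map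
        (LinearMap.mulLeft F (L₂ ^ (d - k)))) :
    Module.finrank F (V₁ ⊔ V₂ : Submodule F (MvPolynomial (Fin (n+1)) F)) -
      Module.finrank F (V₁ ⊓ V₂ : Submodule F (MvPolynomial (Fin (n+1)) F)) =
    2 * ((k + n).choose n - (2 * k - d + n).choose n) :=
  osculating_dist_large_k_general F n d k hkd h2k L₁ L₂ hL₁ hL₂ hL₁0 hL₂0 hprop V₁ V₂ hV₁ hV₂
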